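/- Let V₁, …, V_M : ℝ → ℝ be measurable with Σ_{m=1}^{M} Vₘ(θ)² = 1 for every θ ∈ ℝ. Define multipliers on ℝ²: m₀(ω) = Φ(|ω|) and m_{n,m}(ω) = Wₙ(|ω|)·Vₘ(arg ω) for ω ≠ 0 (where arg ω is the polar angle of ω), with m_{n,m}(0) = 0. Then for every f ∈ L²(ℝ²), ‖𝓕⁻¹( m₀ · 𝓕(f) )‖_{L²}² + Σ_{n=1}^{N−1} Σ_{m=1}^{M} ‖𝓕⁻¹( m_{n,m} · 𝓕(f) )‖_{L²}² = ‖f‖_{L²}²; i.e., the type I empirical curvelet family is a tight frame of L²(ℝ²). -/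

import Mathlib

open FourierTransform MeasureTheory Classical

/-!
Writing `c_ω = lowPass β γ ω`, every radial window is a difference of squares of low-pass windows:
`Φ² = c_{ω¹}²`, `Wₙ² = c_{ωⁿ⁺¹}² - c_{ωⁿ}²` and `W_{N-1}² = 1 - c_{ω^{N-1}}²` on `[0, ∞)`, because the
transition areas do not overlap and `sin² + cos² = 1`. These squares telescope to
`Φ(r)² + Σₙ Wₙ(r)² = 1`, so with `Σₘ Vₘ² = 1` the multipliers satisfy `|m₀|² + Σₙ,ₘ |m_{n,m}|² = 1`
off the null set `{0}`. Integrating `|F f|²` against this identity and using that `F` is unitary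
gives the frame identity.
-/

open Real Finset

noncomputable def lowPass (β : ℝ → ℝ) (γ ω r : ℝ) : ℝ :=
  if r < (1 - γ) * ω then 1
  else if r ≤ (1 + γ) * ω then cos (π / 2 * β ((r - (1 - γ) * ω) / (2 * γ * ω)))
  else 0

section LowPass

variable {β : ℝ → ℝ} {γ ω r : ℝ}

theorem lowPass_of_lt (hr : r < (1 - γ) * ω) : lowPass β γ ω r = 1 :=
  if_pos hr

theorem lowPass_of_mem_Icc (hr₁ : (1 - γ) * ω ≤ r) (hr₂ : r ≤ (1 + γ) * ω) :
    lowPass β γ ω r = cos (π / 2 * β ((r - (1 - γ) * ω) / (2 * γ * ω))) := by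
  rw [lowPass, if_neg hr₁.not_gt, if_pos hr₂]

theorem lowPass_of_le (hβ : β 1 = 1) (hγ : 0 < γ) (hω : 0 < ω) (hr : (1 + γ) * ω ≤ r) :
    lowPass β γ ω r = 0 := by
  rcases hr.eq_or_lt with rfl | hlt
  · have hunit : ((1 + γ) * ω - (1 - γ) * ω) / (2 * γ * ω) = 1 := by
      rw [div_eq_one_iff_eq (by positivity)]
      ring
    rw [lowPass_of_mem_Icc (by nlinarith) le_rfl, hunit, hβ, mul_one, cos_pi_div_two]
  · rw [lowPass, if_neg (by nlinarith), if_neg hlt.not_ge]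

theorem band_sq_eq_lowPass_sq_sub {w : ℝ → ℝ} {ω₁ ω₂ : ℝ} (hβ : β 1 = 1) (hγ : 0 < γ)
    (hω₁ : 0 < ω₁) (hω₂ : 0 < ω₂) (hsep : (1 + γ) * ω₁ ≤ (1 - γ) * ω₂)
    (hrise : ∀ r, (1 - γ) * ω₁ ≤ r → r ≤ (1 + γ) * ω₁ →
      w r = sin (π / 2 * β ((r - (1 - γ) * ω₁) / (2 * γ * ω₁))))
    (hpass : ∀ r, (1 + γ) * ω₁ ≤ r → r ≤ (1 - γ) * ω₂ → w r = 1)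
    (hfall : ∀ r, (1 - γ) * ω₂ ≤ r → r ≤ (1 + γ) * ω₂ →
      w r = cos (π / 2 * β ((r - (1 - γ) * ω₂) / (2 * γ * ω₂))))
    (hstop : ∀ r, 0 ≤ r → (r < (1 - γ) * ω₁ ∨ (1 + γ) * ω₂ < r) → w r = 0) (hr : 0 ≤ r) :
    w r ^ 2 = lowPass β γ ω₂ r ^ 2 - lowPass β γ ω₁ r ^ 2 := by
  have hab₁ : (1 - γ) * ω₁ < (1 + γ) * ω₁ := by nlinarith
  rcases lt_or_ge r ((1 - γ) * ω₁) with h₁ | h₁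
  · rw [hstop r hr (.inl h₁), lowPass_of_lt h₁, lowPass_of_lt (by linarith)]
    norm_num
  rcases lt_or_ge r ((1 + γ) * ω₁) with h₂ | h₂
  · rw [hrise r h₁ h₂.le, lowPass_of_mem_Icc h₁ h₂.le, lowPass_of_lt (by linarith), sin_sq,
      one_pow]
  rw [lowPass_of_le hβ hγ hω₁ h₂]
  rcases lt_or_ge r ((1 - γ) * ω₂) with h₃ | h₃
  · rw [hpass r h₂ h₃.le, lowPass_of_lt h₃]
    norm_num
  rcases le_or_gt r ((1 + γ) * ω₂) with h₄ | h₄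
  · rw [hfall r h₃ h₄, lowPass_of_mem_Icc h₃ h₄]
    ring
  · rw [hstop r hr (.inr h₄), lowPass_of_le hβ hγ hω₂ h₄.le]
    norm_num

theorem highPass_sq_eq_one_sub_lowPass_sq {w : ℝ → ℝ} (hβ : β 1 = 1) (hγ : 0 < γ)
    (hω : 0 < ω)
    (hrise : ∀ r, (1 - γ) * ω ≤ r → r ≤ (1 + γ) * ω →
      w r = sin (π / 2 * β ((r - (1 - γ) * ω) / (2 * γ * ω))))
    (hpass : ∀ r, (1 + γ) * ω ≤ r → w r = 1)
    (hstop : ∀ r, 0 ≤ r → r < (1 - γ) * ω → w r = 0) (hr : 0 ≤ r) :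
    w r ^ 2 = 1 - lowPass β γ ω r ^ 2 := by
  rcases lt_or_ge r ((1 - γ) * ω) with h₁ | h₁
  · rw [hstop r hr h₁, lowPass_of_lt h₁]
    norm_num
  rcases le_or_gt r ((1 + γ) * ω) with h₂ | h₂
  · rw [hrise r h₁ h₂, lowPass_of_mem_Icc h₁ h₂, sin_sq]
  · rw [hpass r h₂.le, lowPass_of_le hβ hγ hω h₂.le]
    norm_num

theorem eq_lowPass_of_profile {φ : ℝ → ℝ} (hβ : β 1 = 1) (hγ : 0 < γ) (hω : 0 < ω)
    (hpass : ∀ r, 0 ≤ r → r ≤ (1 - γ) * ω → φ r = 1)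
    (hfall : ∀ r, (1 - γ) * ω ≤ r → r ≤ (1 + γ) * ω →
      φ r = cos (π / 2 * β ((r - (1 - γ) * ω) / (2 * γ * ω))))
    (hstop : ∀ r, (1 + γ) * ω < r → φ r = 0) (hr : 0 ≤ r) :
    φ r = lowPass β γ ω r := by
  rcases lt_or_ge r ((1 - γ) * ω) with h₁ | h₁
  · rw [hpass r hr h₁.le, lowPass_of_lt h₁]
  rcases le_or_gt r ((1 + γ) * ω) with h₂ | h₂
  · rw [hfall r h₁ h₂, lowPass_of_mem_Icc h₁ h₂]
  · rw [hstop r h₂, lowPass_of_le hβ hγ hω h₂.le]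

end LowPass

theorem pos_of_transition_sep {γ : ℝ} {ω : ℕ → ℝ} {K : ℕ} (hγ₀ : 0 < γ) (hγ₁ : γ < 1)
    (hω : 0 < ω 1) (hsep : ∀ n, 1 ≤ n → n ≤ K - 1 → (1 + γ) * ω n ≤ (1 - γ) * ω (n + 1)) :
    ∀ n, 1 ≤ n → n ≤ K → 0 < ω n := by
  intro n hn
  induction n, hn using Nat.le_induction with
  | base => exact fun _ => hω
  | succ n hn ih =>
    intro hnK
    nlinarith [hsep n hn (by omega), ih (by omega)]

theorem add_sum_Icc_eq_one_of_telescoping {φ : ℝ} {w c : ℕ → ℝ} {K : ℕ} (hK : 1 ≤ K)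
    (hφ : φ = c 1) (hw : ∀ n, 1 ≤ n → n < K → w n = c (n + 1) - c n) (hlast : w K = 1 - c K) :
    φ + ∑ n ∈ Icc 1 K, w n = 1 := by
  rw [← Ico_insert_right hK, sum_insert right_notMem_Ico, hlast,
    sum_congr rfl fun n hn => hw n (mem_Ico.1 hn).1 (mem_Ico.1 hn).2, sum_Ico_sub c hK, hφ]
  ring

theorem norm_ofReal_mul_sq_add_sum_sum_eq {ι κ : Type*} {s : Finset ι} {t : Finset κ}
    {φ : ℝ} {w : ι → ℝ} {v : κ → ℝ} (hw : φ ^ 2 + ∑ i ∈ s, w i ^ 2 = 1)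
    (hv : ∑ j ∈ t, v j ^ 2 = 1) (z : ℂ) :
    ‖(φ : ℂ) * z‖ ^ 2 + ∑ i ∈ s, ∑ j ∈ t, ‖((w i : ℂ) * v j) * z‖ ^ 2 = ‖z‖ ^ 2 := by
  simp only [norm_mul, Complex.norm_real, Real.norm_eq_abs, mul_pow, sq_abs]
  have hinner (i : ι) : ∑ j ∈ t, w i ^ 2 * v j ^ 2 * ‖z‖ ^ 2 = w i ^ 2 * ‖z‖ ^ 2 := by
    rw [← sum_mul, ← mul_sum, hv, mul_one]
  rw [sum_congr rfl fun i _ => hinner i, ← sum_mul, ← add_mul, hw, one_mul]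

section L2

variable {α 𝕜 E : Type*} [MeasurableSpace α] {μ : Measure α} [RCLike 𝕜]
  [NormedAddCommGroup E] [InnerProductSpace 𝕜 E]

theorem Lp.integrable_norm_sq (f : Lp E 2 μ) : Integrable (fun x => ‖f x‖ ^ 2) μ :=
  (memLp_two_iff_integrable_sq_norm (Lp.aestronglyMeasurable f)).1 (Lp.memLp f)

include 𝕜 in
theorem Lp.norm_sq_eq_integral_norm_sq (f : Lp E 2 μ) : ‖f‖ ^ 2 = ∫ x, ‖f x‖ ^ 2 ∂μ := by
  rw [← inner_self_eq_norm_sq (𝕜 := 𝕜) f, L2.inner_def, ← integral_re (L2.integrable_inner f f)]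
  simp only [inner_self_eq_norm_sq]

include 𝕜 in
theorem Lp.norm_sq_add_sum_norm_sq_eq_of_ae {ι : Type*} (s : Finset ι) (g₀ : Lp E 2 μ)
    (g : ι → Lp E 2 μ) (h : Lp E 2 μ)
    (hae : ∀ᵐ x ∂μ, ‖g₀ x‖ ^ 2 + ∑ i ∈ s, ‖g i x‖ ^ 2 = ‖h x‖ ^ 2) :
    ‖g₀‖ ^ 2 + ∑ i ∈ s, ‖g i‖ ^ 2 = ‖h‖ ^ 2 := by
  simp only [Lp.norm_sq_eq_integral_norm_sq (𝕜 := 𝕜)]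
  rw [← integral_finsetSum _ fun i _ => Lp.integrable_norm_sq (g i),
    ← integral_add (Lp.integrable_norm_sq g₀)
      (integrable_finsetSum _ fun i _ => Lp.integrable_norm_sq (g i))]
  exact integral_congr_ae hae

end L2

theorem empirical_curvelet_I_tight_frame_general
    (β : ℝ → ℝ)
    (hβ2 : ∀ x : ℝ, 1 ≤ x → β x = 1)
    (N : ℕ) (hN : 2 ≤ N) (ω : ℕ → ℝ)
    (hω0 : 0 < ω 1)
    (γ : ℝ) (hγ : γ ∈ Set.Ioo (0 : ℝ) 1)
    (hsep : ∀ n, 1 ≤ n → n ≤ N - 2 → (1 + γ) * ω n ≤ (1 - γ) * ω (n + 1))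
    (Φ : ℝ → ℝ) (W : ℕ → ℝ → ℝ)
    (hΦ1 : ∀ r : ℝ, 0 ≤ r → r ≤ (1 - γ) * ω 1 → Φ r = 1)
    (hΦ2 : ∀ r : ℝ, (1 - γ) * ω 1 ≤ r → r ≤ (1 + γ) * ω 1 →
      Φ r = Real.cos (Real.pi / 2 * β ((r - (1 - γ) * ω 1) / (2 * γ * ω 1))))
    (hΦ3 : ∀ r : ℝ, (1 + γ) * ω 1 < r → Φ r = 0)
    (hW1 : ∀ n, 1 ≤ n → n ≤ N - 2 → ∀ r : ℝ, (1 - γ) * ω n ≤ r → r ≤ (1 + γ) * ω n →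
      W n r = Real.sin (Real.pi / 2 * β ((r - (1 - γ) * ω n) / (2 * γ * ω n))))
    (hW2 : ∀ n, 1 ≤ n → n ≤ N - 2 → ∀ r : ℝ, (1 + γ) * ω n ≤ r → r ≤ (1 - γ) * ω (n + 1) →
      W n r = 1)
    (hW3 : ∀ n, 1 ≤ n → n ≤ N - 2 → ∀ r : ℝ,
      (1 - γ) * ω (n + 1) ≤ r → r ≤ (1 + γ) * ω (n + 1) →
      W n r = Real.cos (Real.pi / 2 * β ((r - (1 - γ) * ω (n + 1)) / (2 * γ * ω (n + 1)))))
    (hW4 : ∀ n, 1 ≤ n → n ≤ N - 2 → ∀ r : ℝ, 0 ≤ r →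
      (r < (1 - γ) * ω n ∨ (1 + γ) * ω (n + 1) < r) → W n r = 0)
    (hWl1 : ∀ r : ℝ, (1 - γ) * ω (N - 1) ≤ r → r ≤ (1 + γ) * ω (N - 1) →
      W (N - 1) r = Real.sin (Real.pi / 2 * β ((r - (1 - γ) * ω (N - 1)) / (2 * γ * ω (N - 1)))))
    (hWl2 : ∀ r : ℝ, (1 + γ) * ω (N - 1) ≤ r → W (N - 1) r = 1)
    (hWl3 : ∀ r : ℝ, 0 ≤ r → r < (1 - γ) * ω (N - 1) → W (N - 1) r = 0)
    (M : ℕ) (V : ℕ → ℝ → ℝ)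
    (hV : ∀ θ : ℝ, ∑ m ∈ Finset.Icc 1 M, (V m θ) ^ 2 = 1)
    (F : Lp ℂ 2 (volume : Measure (EuclideanSpace ℝ (Fin 2))) ≃ₗᵢ[ℂ]
      Lp ℂ 2 (volume : Measure (EuclideanSpace ℝ (Fin 2)))) :
    ∀ (f : Lp ℂ 2 (volume : Measure (EuclideanSpace ℝ (Fin 2))))
      (g₀ : Lp ℂ 2 (volume : Measure (EuclideanSpace ℝ (Fin 2))))
      (g : ℕ → ℕ → Lp ℂ 2 (volume : Measure (EuclideanSpace ℝ (Fin 2)))),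
      ((g₀ : EuclideanSpace ℝ (Fin 2) → ℂ) =ᵐ[volume]
        fun x => (Φ ‖x‖ : ℂ) * (F f : EuclideanSpace ℝ (Fin 2) → ℂ) x) →
      (∀ n, 1 ≤ n → n ≤ N - 1 → ∀ m, 1 ≤ m → m ≤ M →
        (g n m : EuclideanSpace ℝ (Fin 2) → ℂ) =ᵐ[volume]
          fun x => (if x = 0 then (0 : ℂ)
              else (W n ‖x‖ * V m (Complex.arg (x 0 + x 1 * Complex.I)) : ℂ)) *
            (F f : EuclideanSpace ℝ (Fin 2) → ℂ) x) →
      ‖F.symm g₀‖ ^ 2 + ∑ n ∈ Finset.Icc 1 (N - 1), ∑ m ∈ Finset.Icc 1 M,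
        ‖F.symm (g n m)‖ ^ 2 = ‖f‖ ^ 2 := by
  intro f g₀ g hg₀ hg
  obtain ⟨hγ₀, hγ₁⟩ := hγ
  have hβ : β 1 = 1 := hβ2 1 le_rfl
  have hωpos := pos_of_transition_sep (K := N - 1) hγ₀ hγ₁ hω0 fun n hn _ =>
    hsep n hn (by omega)
  have hunity (r : ℝ) (hr : 0 ≤ r) : Φ r ^ 2 + ∑ n ∈ Icc 1 (N - 1), W n r ^ 2 = 1 :=
    add_sum_Icc_eq_one_of_telescoping (c := fun n => lowPass β γ (ω n) r ^ 2) (by omega)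
      (by rw [eq_lowPass_of_profile hβ hγ₀ hω0 hΦ1 hΦ2 hΦ3 hr])
      (fun n hn hnN => band_sq_eq_lowPass_sq_sub hβ hγ₀ (hωpos n hn (by omega))
        (hωpos (n + 1) (by omega) (by omega)) (hsep n hn (by omega)) (hW1 n hn (by omega))
        (hW2 n hn (by omega)) (hW3 n hn (by omega)) (hW4 n hn (by omega)) hr)
      (highPass_sq_eq_one_sub_lowPass_sq hβ hγ₀ (hωpos _ (by omega) le_rfl) hWl1 hWl2 hWl3 hr)
  have hgae : ∀ᵐ x, ∀ n ∈ Icc 1 (N - 1), ∀ m ∈ Icc 1 M, (g n m : _ → ℂ) x =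
      (if x = 0 then (0 : ℂ) else (W n ‖x‖ * V m (Complex.arg (x 0 + x 1 * Complex.I)) : ℂ)) *
        (F f : _ → ℂ) x := by
    simp only [Filter.eventually_all_finset]
    exact fun n hn m hm =>
      hg n (mem_Icc.1 hn).1 (mem_Icc.1 hn).2 m (mem_Icc.1 hm).1 (mem_Icc.1 hm).2
  have hframe := Lp.norm_sq_add_sum_norm_sq_eq_of_ae (𝕜 := ℂ) (Icc 1 (N - 1) ×ˢ Icc 1 M) g₀
    (fun p => g p.1 p.2) (F f) <| by
      filter_upwards [hg₀, hgae, Measure.ae_ne volume 0] with x hx₀ hx hx0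
      rw [hx₀, sum_product, sum_congr rfl fun n hn => sum_congr rfl fun m hm => by
        rw [hx n hn m hm, if_neg hx0]]
      exact norm_ofReal_mul_sq_add_sum_sum_eq (hunity ‖x‖ (norm_nonneg x)) (hV _) _
  rw [sum_product] at hframe
  simpa only [LinearIsometryEquiv.norm_map] using hframe

/-- The type I empirical curvelet family is a tight frame of `L²(ℝ²)`: with
`m₀(ω) = Φ(|ω|)`, `m_{n,m}(ω) = Wₙ(|ω|)·Vₘ(arg ω)` for `ω ≠ 0` and
`m_{n,m}(0) = 0`, one has
`‖𝓕⁻¹(m₀·𝓕 f)‖² + Σₙ Σₘ ‖𝓕⁻¹(m_{n,m}·𝓕 f)‖² = ‖f‖²` for every `f ∈ L²(ℝ²)`. -/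
theorem empirical_curvelet_I_tight_frame
    (β : ℝ → ℝ)
    (hβ0 : ∀ x : ℝ, x ≤ 0 → β x = 0)
    (hβ1 : ∀ x ∈ Set.Icc (0 : ℝ) 1, β x = x ^ 4 * (35 - 84 * x + 70 * x ^ 2 - 20 * x ^ 3))
    (hβ2 : ∀ x : ℝ, 1 ≤ x → β x = 1)
    (N : ℕ) (hN : 2 ≤ N) (ω : ℕ → ℝ)
    (hω0 : 0 < ω 1)
    (hωmono : ∀ n, 1 ≤ n → n ≤ N - 2 → ω n < ω (n + 1))
    (γ : ℝ) (hγ : γ ∈ Set.Ioo (0 : ℝ) 1)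
    (hsep : ∀ n, 1 ≤ n → n ≤ N - 2 → (1 + γ) * ω n ≤ (1 - γ) * ω (n + 1))
    (Φ : ℝ → ℝ) (W : ℕ → ℝ → ℝ)
    (hΦ1 : ∀ r : ℝ, 0 ≤ r → r ≤ (1 - γ) * ω 1 → Φ r = 1)
    (hΦ2 : ∀ r : ℝ, (1 - γ) * ω 1 ≤ r → r ≤ (1 + γ) * ω 1 →
      Φ r = Real.cos (Real.pi / 2 * β ((r - (1 - γ) * ω 1) / (2 * γ * ω 1))))
    (hΦ3 : ∀ r : ℝ, (1 + γ) * ω 1 < r → Φ r = 0)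
    (hW1 : ∀ n, 1 ≤ n → n ≤ N - 2 → ∀ r : ℝ, (1 - γ) * ω n ≤ r → r ≤ (1 + γ) * ω n →
      W n r = Real.sin (Real.pi / 2 * β ((r - (1 - γ) * ω n) / (2 * γ * ω n))))
    (hW2 : ∀ n, 1 ≤ n → n ≤ N - 2 → ∀ r : ℝ, (1 + γ) * ω n ≤ r → r ≤ (1 - γ) * ω (n + 1) →
      W n r = 1)
    (hW3 : ∀ n, 1 ≤ n → n ≤ N - 2 → ∀ r : ℝ,
      (1 - γ) * ω (n + 1) ≤ r → r ≤ (1 + γ) * ω (n + 1) →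
      W n r = Real.cos (Real.pi / 2 * β ((r - (1 - γ) * ω (n + 1)) / (2 * γ * ω (n + 1)))))
    (hW4 : ∀ n, 1 ≤ n → n ≤ N - 2 → ∀ r : ℝ, 0 ≤ r →
      (r < (1 - γ) * ω n ∨ (1 + γ) * ω (n + 1) < r) → W n r = 0)
    (hWl1 : ∀ r : ℝ, (1 - γ) * ω (N - 1) ≤ r → r ≤ (1 + γ) * ω (N - 1) →
      W (N - 1) r = Real.sin (Real.pi / 2 * β ((r - (1 - γ) * ω (N - 1)) / (2 * γ * ω (N - 1)))))
    (hWl2 : ∀ r : ℝ, (1 + γ) * ω (N - 1) ≤ r → W (N - 1) r = 1)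
    (hWl3 : ∀ r : ℝ, 0 ≤ r → r < (1 - γ) * ω (N - 1) → W (N - 1) r = 0)
    (M : ℕ) (hM : 1 ≤ M) (V : ℕ → ℝ → ℝ)
    (hVmeas : ∀ m, 1 ≤ m → m ≤ M → Measurable (V m))
    (hV : ∀ θ : ℝ, ∑ m ∈ Finset.Icc 1 M, (V m θ) ^ 2 = 1)
    (F : Lp ℂ 2 (volume : Measure (EuclideanSpace ℝ (Fin 2))) ≃ₗᵢ[ℂ]
      Lp ℂ 2 (volume : Measure (EuclideanSpace ℝ (Fin 2))))
    (hF : ∀ (f : EuclideanSpace ℝ (Fin 2) → ℂ) (hf1 : Integrable f)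
      (hf2 : MemLp f 2 (volume : Measure (EuclideanSpace ℝ (Fin 2)))),
      (F (hf2.toLp f) : EuclideanSpace ℝ (Fin 2) → ℂ) =ᵐ[volume] 𝓕 f) :
    ∀ (f : Lp ℂ 2 (volume : Measure (EuclideanSpace ℝ (Fin 2))))
      (g₀ : Lp ℂ 2 (volume : Measure (EuclideanSpace ℝ (Fin 2))))
      (g : ℕ → ℕ → Lp ℂ 2 (volume : Measure (EuclideanSpace ℝ (Fin 2)))),
      ((g₀ : EuclideanSpace ℝ (Fin 2) → ℂ) =ᵐ[volume]
        fun x => (Φ ‖x‖ : ℂ) * (F f : EuclideanSpace ℝ (Fin 2) → ℂ) x) →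
      (∀ n, 1 ≤ n → n ≤ N - 1 → ∀ m, 1 ≤ m → m ≤ M →
        (g n m : EuclideanSpace ℝ (Fin 2) → ℂ) =ᵐ[volume]
          fun x => (if x = 0 then (0 : ℂ)
              else (W n ‖x‖ * V m (Complex.arg (x 0 + x 1 * Complex.I)) : ℂ)) *
            (F f : EuclideanSpace ℝ (Fin 2) → ℂ) x) →
      ‖F.symm g₀‖ ^ 2 + ∑ n ∈ Finset.Icc 1 (N - 1), ∑ m ∈ Finset.Icc 1 M,
        ‖F.symm (g n m)‖ ^ 2 = ‖f‖ ^ 2 :=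
  empirical_curvelet_I_tight_frame_general β hβ2 N hN ω hω0 γ hγ hsep Φ W hΦ1 hΦ2 hΦ3 hW1 hW2 hW3
    hW4 hWl1 hWl2 hWl3 M V hV F
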